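/- Let T be an even positive natural number, s an even positive natural number with gcd(s, T) = 2, and a a natural number, and let o : ℕ → ℝ be T-periodic with o(n) ∈ {0, 1} for all n and with Σ_{t < T, t % 2 = a % 2} o(t) > 0. Then the ratios (Σ_{n=0}^{N−1} o(a + n·s)·o(a + n·s + 1)) / (Σ_{n=0}^{N−1} o(a + n·s)) converge, as N → ∞, to (Σ_{t < T, t % 2 = a % 2} o(t)·o(t+1)) / (Σ_{t < T, t % 2 = a % 2} o(t)). In particular the limit depends on a only through the parity of a, and does not depend on s. -/

import Mathlib

/-!
With `d = gcd s T`, the residues `(a + n * s) % T` for `n < T / d` run exactly once through the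
residue class of `a` modulo `d` in `[0, T)`, and after `T / d` steps `a + n * s` has advanced by
a multiple of `T`. So both folded sequences are `T / d`-periodic; their Cesàro means converge to
their means over one period, which are the class sums divided by `T / d`, and this factor
cancels in the ratio.
-/

open Finset Filter Function

namespace Function.Periodic

variable {f : ℕ → ℝ} {m : ℕ}

theorem sum_range_add_period (hf : Periodic f m) (N : ℕ) :
    ∑ i ∈ range (N + m), f i = ∑ i ∈ range N, f i + ∑ i ∈ range m, f i := by
  rw [add_comm N, sum_range_add, add_comm]
  exact congrArg (· + _) (sum_congr rfl fun i _ => by rw [add_comm, hf])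

theorem exists_abs_le (hf : Periodic f m) (hm : 0 < m) : ∃ C, ∀ n, |f n| ≤ C :=
  ⟨∑ i ∈ range m, |f i|, fun n => by
    rw [← hf.map_mod_nat n]
    exact single_le_sum (fun i _ => abs_nonneg (f i)) (mem_range.2 (Nat.mod_lt n hm))⟩

theorem tendsto_sum_range_div (hf : Periodic f m) (hm : 0 < m) :
    Tendsto (fun N : ℕ => (∑ i ∈ range N, f i) / N) atTop
      (nhds ((∑ i ∈ range m, f i) / m)) := by
  set A := ∑ i ∈ range m, f i
  have hmR : (m : ℝ) ≠ 0 := by positivity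
  -- The deviation of the partial sums from the linear trend is periodic, hence bounded.
  set g : ℕ → ℝ := fun N => ∑ i ∈ range N, f i - N * (A / m)
  have hg : Periodic g m := fun N => by
    simp only [g, hf.sum_range_add_period N, Nat.cast_add]
    field_simp
    ring
  obtain ⟨C, hC⟩ := hg.exists_abs_le hm
  have hg_div : Tendsto (fun N : ℕ => g N / N) atTop (nhds 0) := by
    refine squeeze_zero_norm (fun N => ?_) (tendsto_const_div_atTop_nhds_zero_nat C)
    rw [norm_div, Real.norm_natCast, Real.norm_eq_abs]
    exact div_le_div_of_nonneg_right (hC N) (Nat.cast_nonneg N)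
  have hlim := (tendsto_const_nhds (x := A / m)).add hg_div
  rw [add_zero] at hlim
  refine hlim.congr' ?_
  filter_upwards [eventually_ne_atTop 0] with N hN
  simp only [g]
  field_simp
  ring

end Function.Periodic

theorem Function.Periodic.comp_add_mul (a s : ℕ) {T : ℕ} {α : Type*} {f : ℕ → α}
    (hf : Periodic f T) : Periodic (fun n => f (a + n * s)) (T / Nat.gcd s T) := fun n => by
  have h : a + (n + T / Nat.gcd s T) * s = a + n * s + s / Nat.gcd s T * T := by
    rw [add_mul, ← add_assoc, Nat.div_mul_right_comm (Nat.gcd_dvd_right s T),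
      Nat.mul_div_assoc _ (Nat.gcd_dvd_left s T), mul_comm T]
  simp only [h]
  exact hf.nat_mul _ _

theorem Nat.injOn_add_mul_mod (a s : ℕ) {T : ℕ} (hT : 0 < T) :
    Set.InjOn (fun n => (a + n * s) % T) (range (T / Nat.gcd s T)) := by
  intro x hx y hy hxy
  have hmod := (Nat.ModEq.add_left_cancel' a hxy).cancel_right_div_gcd hT
  rw [Nat.gcd_comm] at hmod
  exact Nat.ModEq.eq_of_lt_of_lt hmod (mem_range.1 hx) (mem_range.1 hy)

theorem Nat.image_range_add_mul_mod (a s : ℕ) {T : ℕ} (hT : 0 < T) :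
    (range (T / Nat.gcd s T)).image (fun n => (a + n * s) % T) =
      (range T).filter (fun t => t % Nat.gcd s T = a % Nat.gcd s T) := by
  set g := Nat.gcd s T
  apply eq_of_subset_of_card_le
  · intro t ht
    obtain ⟨n, -, rfl⟩ := mem_image.1 ht
    refine mem_filter.2 ⟨mem_range.2 (Nat.mod_lt _ hT), ?_⟩
    calc (a + n * s) % T ≡ a + n * s [MOD g] := (Nat.mod_modEq _ _).of_dvd (Nat.gcd_dvd_right s T)
      _ ≡ a + 0 [MOD g] := Nat.ModEq.add_left a
          (Nat.modEq_zero_iff_dvd.2 (dvd_mul_of_dvd_right (Nat.gcd_dvd_left s T) n))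
  · have hg : 0 < g := Nat.gcd_pos_of_pos_right s hT
    rw [Finset.card_image_of_injOn (Nat.injOn_add_mul_mod a s hT), card_range,
      ← Nat.count_eq_card_filter_range]
    change Nat.count (· ≡ a [MOD g]) T ≤ T / g
    rw [Nat.count_modEq_card _ hg, Nat.mod_eq_zero_of_dvd (Nat.gcd_dvd_right s T)]
    simp

theorem Function.Periodic.sum_filter_mod_gcd {α : Type*} [AddCommMonoid α] {f : ℕ → α} {T : ℕ}
    (hf : Periodic f T) (hT : 0 < T) (a s : ℕ) :
    ∑ t ∈ (range T).filter (fun t => t % Nat.gcd s T = a % Nat.gcd s T), f t =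
      ∑ n ∈ range (T / Nat.gcd s T), f (a + n * s) := by
  rw [← Nat.image_range_add_mul_mod a s hT, sum_image (Nat.injOn_add_mul_mod a s hT)]
  exact sum_congr rfl fun n _ => hf.map_mod_nat _

theorem Function.Periodic.tendsto_sum_add_mul_div_sum {u v : ℕ → ℝ} {T : ℕ} (hT : 0 < T)
    (hu : Periodic u T) (hv : Periodic v T) (a s : ℕ)
    (hpos : 0 < ∑ t ∈ (range T).filter (fun t => t % Nat.gcd s T = a % Nat.gcd s T), v t) :
    Tendsto (fun N : ℕ => (∑ n ∈ range N, u (a + n * s)) / (∑ n ∈ range N, v (a + n * s)))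
      atTop (nhds ((∑ t ∈ (range T).filter (fun t => t % Nat.gcd s T = a % Nat.gcd s T), u t) /
        (∑ t ∈ (range T).filter (fun t => t % Nat.gcd s T = a % Nat.gcd s T), v t))) := by
  have hm : 0 < T / Nat.gcd s T :=
    Nat.div_pos (Nat.gcd_le_right (m := s) hT) (Nat.gcd_pos_of_pos_right s hT)
  have hmR : ((T / Nat.gcd s T : ℕ) : ℝ) ≠ 0 := by positivity
  rw [hv.sum_filter_mod_gcd hT] at hpos
  rw [hu.sum_filter_mod_gcd hT, hv.sum_filter_mod_gcd hT]
  have hlim := ((hu.comp_add_mul a s).tendsto_sum_range_div hm).div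
    ((hv.comp_add_mul a s).tendsto_sum_range_div hm) (div_pos hpos (by positivity)).ne'
  rw [div_div_div_cancel_right₀ hmR] at hlim
  refine hlim.congr' ?_
  filter_upwards [eventually_ne_atTop 0] with N hN
  exact div_div_div_cancel_right₀ (Nat.cast_ne_zero.2 hN) _ _

theorem stmt8_general (T s : ℕ) (hT : 0 < T)
    (hgcd : Nat.gcd s T = 2) (a : ℕ)
    (o : ℕ → ℝ) (hper : ∀ n, o (n + T) = o n)
    (hpos : 0 < ∑ t ∈ (Finset.range T).filter (fun t => t % 2 = a % 2), o t) :
    Filter.Tendsto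
      (fun N : ℕ =>
        (∑ n ∈ Finset.range N, o (a + n * s) * o (a + n * s + 1)) /
          (∑ n ∈ Finset.range N, o (a + n * s)))
      Filter.atTop
      (nhds ((∑ t ∈ (Finset.range T).filter (fun t => t % 2 = a % 2), o t * o (t + 1)) /
        (∑ t ∈ (Finset.range T).filter (fun t => t % 2 = a % 2), o t))) := by
  have h := (Periodic.mul hper (Periodic.add_const hper 1)).tendsto_sum_add_mul_div_sum hT hper
    a s (by rwa [hgcd])
  rwa [hgcd] at h

/-- For an even positive period `T`, an even positive step `s` with `gcd(s, T) = 2`, and a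
binary `T`-periodic observation stream `o` whose sum over the parity class of `a` is
positive, the empirical conditional probabilities obtained by folding at step `s` from
offset `a` converge to the parity-class conditional frequency; in particular the limit
depends on `a` only through its parity and does not depend on `s`. -/
theorem stmt8 (T s : ℕ) (hT : 0 < T) (hTe : Even T) (hs : 0 < s) (hse : Even s)
    (hgcd : Nat.gcd s T = 2) (a : ℕ)
    (o : ℕ → ℝ) (hper : ∀ n, o (n + T) = o n) (hbin : ∀ n, o n = 0 ∨ o n = 1)
    (hpos : 0 < ∑ t ∈ (Finset.range T).filter (fun t => t % 2 = a % 2), o t) :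
    Filter.Tendsto
      (fun N : ℕ =>
        (∑ n ∈ Finset.range N, o (a + n * s) * o (a + n * s + 1)) /
          (∑ n ∈ Finset.range N, o (a + n * s)))
      Filter.atTop
      (nhds ((∑ t ∈ (Finset.range T).filter (fun t => t % 2 = a % 2), o t * o (t + 1)) /
        (∑ t ∈ (Finset.range T).filter (fun t => t % 2 = a % 2), o t))) :=
  stmt8_general T s hT hgcd a o hper hpos
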